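/- arXiv:0811.1211 — 3 statements merged into one kernel-verified Lean document; each statement's English description precedes it below -/
import Mathlib

section
/- Let a_1, ..., a_N be real numbers that are linearly independent over the rationals, let b_1, ..., b_N be arbitrary real numbers, and let ε, T be positive real numbers. Then there exist a real number t > T and integers x_1, ..., x_N such that |t·a_j − b_j − x_j| ≤ ε for all 1 ≤ j ≤ N. -/
/-!
Bohr's argument. Put `zⱼ(t) = exp (2πi (t aⱼ - bⱼ))`. Expanding `∏ⱼ (1 + zⱼ(t)) ^ (2k)` by the
binomial theorem gives, up to a unimodular factor, an exponential sum in `t` whose frequencies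
`2π ∑ⱼ (nⱼ - k) aⱼ` vanish only for `n = (k, …, k)`, by rational independence; that term has
modulus `C(2k, k) ^ N`. Averaging over a long interval beyond `T` kills all other terms, so at some
`t > T` the product has modulus `≥ C(2k, k) ^ N / 2`. Since `C(2k, k) ≥ 4 ^ k / 2k` and every factor
`|1 + zⱼ| = 2 |cos (π (t aⱼ - bⱼ))|` is at most `2`, for large `k` each factor is at least
`2 cos (π ε)`, i.e. `t aⱼ - bⱼ` lies within `ε` of an integer.
-/

open Complex Finset
open scoped Real

open Real in
lemma abs_sub_round_le_of_cos_le_abs_cos {θ ε : ℝ} (hε0 : 0 ≤ ε) (hε1 : ε ≤ 1)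
    (h : Real.cos (π * ε) ≤ |Real.cos (π * θ)|) : |θ - round θ| ≤ ε := by
  set d := θ - round θ
  have hd : |d| ≤ 1 / 2 := abs_sub_round θ
  have hcos : |Real.cos (π * θ)| = Real.cos (π * |d|) := by
    rw [show π * θ = π * d + round θ * π by simp [d]; ring, cos_add_int_mul_pi, abs_mul,
      abs_neg_one_zpow, one_mul, ← cos_abs, abs_mul, abs_of_pos pi_pos]
    exact abs_of_nonneg <| cos_nonneg_of_mem_Icc
      ⟨by nlinarith [pi_pos, abs_nonneg d], by nlinarith [pi_pos]⟩
  rw [hcos] at h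
  have hmem : ∀ x, 0 ≤ x → x ≤ 1 → π * x ∈ Set.Icc 0 π := fun x h0 h1 =>
    ⟨by nlinarith [pi_pos], by nlinarith [pi_pos]⟩
  have := (strictAntiOn_cos.le_iff_ge (hmem ε hε0 hε1)
    (hmem |d| (abs_nonneg d) (by linarith))).1 h
  nlinarith [pi_pos]

lemma norm_one_add_exp_two_pi_mul_I (θ : ℝ) :
    ‖1 + exp (↑(2 * π * θ) * I)‖ = 2 * |Real.cos (π * θ)| := by
  have h : 1 + exp (↑(2 * π * θ) * I) = -(exp (I * ↑(2 * π * θ + π)) - 1) := by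
    rw [ofReal_add, mul_add, Complex.exp_add, mul_comm I, mul_comm I, exp_pi_mul_I]; ring
  rw [h, norm_neg, norm_exp_I_mul_ofReal_sub_one, norm_mul, Real.norm_eq_abs, Real.norm_eq_abs,
    abs_two, show (2 * π * θ + π) / 2 = π * θ + π / 2 by ring, Real.sin_add_pi_div_two]

lemma norm_one_add_exp_le_two (x : ℝ) : ‖1 + exp (x * I)‖ ≤ 2 :=
  (norm_add_le _ _).trans (by rw [norm_one, norm_exp_ofReal_mul_I]; norm_num)

lemma norm_integral_exp_ofReal_mul_I_le {c : ℝ} (hc : c ≠ 0) (u v : ℝ) :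
    ‖∫ t in u..v, exp (c * t * I)‖ ≤ 2 / |c| := by
  have hcI : (c : ℂ) * I ≠ 0 := mul_ne_zero (ofReal_ne_zero.2 hc) I_ne_zero
  have hunit : ∀ x : ℝ, ‖exp (c * I * x)‖ = 1 := fun x => by
    rw [mul_right_comm, ← ofReal_mul]; exact norm_exp_ofReal_mul_I _
  simp_rw [mul_right_comm _ _ I]
  rw [integral_exp_mul_complex hcI, norm_div, norm_mul, norm_I, norm_real, Real.norm_eq_abs,
    mul_one]
  gcongr
  calc _ ≤ ‖exp (c * I * v)‖ + ‖exp (c * I * u)‖ := norm_sub_le _ _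
    _ = 2 := by rw [hunit, hunit]; norm_num

lemma exists_gt_norm_sub_le_norm_sum_exp {κ : Type*} [Fintype κ] (A : κ → ℂ) (c : κ → ℝ)
    {i₀ : κ} (hc : ∀ i, c i = 0 ↔ i = i₀) (T : ℝ) {η : ℝ} (hη : 0 < η) :
    ∃ t, T < t ∧ ‖A i₀‖ - η ≤ ‖∑ i, A i * exp (c i * t * I)‖ := by
  classical
  by_contra! h
  set E := ∑ i ∈ univ.erase i₀, ‖A i‖ * (2 / |c i|)
  set S := E / η + 1
  have hS : 0 < S := by positivity
  have hmean : ‖A i₀‖ * S - E ≤ ‖∫ t in T..T + S, ∑ i, A i * exp (c i * t * I)‖ := by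
    rw [intervalIntegral.integral_finsetSum fun i _ =>
      (by fun_prop : Continuous _).intervalIntegrable _ _,
      ← add_sum_erase _ _ (mem_univ i₀)]
    have hconst : ∫ t in T..T + S, A i₀ * exp (c i₀ * t * I) = A i₀ * S := by
      simp [(hc i₀).2 rfl, mul_comm]
    have hrest : ‖∑ i ∈ univ.erase i₀, ∫ t in T..T + S, A i * exp (c i * t * I)‖ ≤ E := by
      refine (norm_sum_le _ _).trans (sum_le_sum fun i hi => ?_)
      rw [intervalIntegral.integral_const_mul, norm_mul]
      gcongr
      exact norm_integral_exp_ofReal_mul_I_le (mt (hc i).1 (ne_of_mem_erase hi)) _ _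
    have hnorm : ‖A i₀ * S‖ = ‖A i₀‖ * S := by
      rw [norm_mul, norm_real, Real.norm_of_nonneg hS.le]
    rw [hconst]
    have := norm_sub_norm_le (A i₀ * S)
      (-∑ i ∈ univ.erase i₀, ∫ t in T..T + S, A i * exp (c i * t * I))
    rw [norm_neg, sub_neg_eq_add] at this
    linarith
  have hbound : ‖∫ t in T..T + S, ∑ i, A i * exp (c i * t * I)‖ ≤ (‖A i₀‖ - η) * S := by
    have := intervalIntegral.norm_integral_le_of_norm_le_const (C := ‖A i₀‖ - η)
      (f := fun t : ℝ => ∑ i, A i * exp (c i * t * I)) (a := T) (b := T + S)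
      fun t ht => (h t (Set.uIoc_of_le (by linarith : T ≤ T + S) ▸ ht).1).le
    rwa [add_sub_cancel_left, abs_of_pos hS] at this
  have hES : η * S = E + η := by rw [mul_add, mul_div_cancel₀ _ hη.ne', mul_one]
  nlinarith

lemma prod_one_add_pow_eq_sum {R ι : Type*} [CommSemiring R] [Fintype ι] [DecidableEq ι]
    (z : ι → R) (m : ℕ) :
    (∏ i, (1 + z i)) ^ m =
      ∑ n : ι → Fin (m + 1), ∏ i, ((m.choose (n i) : R) * z i ^ (n i : ℕ)) := by
  have h (w : R) : (1 + w) ^ m = ∑ j : Fin (m + 1), (m.choose j : R) * w ^ (j : ℕ) := by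
    rw [add_comm, add_pow, ← Fin.sum_univ_eq_sum_range]
    simp [mul_comm]
  simp_rw [← prod_pow, h]
  exact Fintype.prod_sum _

lemma norm_prod_one_add_exp_pow_eq {ι : Type*} [Fintype ι] [DecidableEq ι] (k : ℕ)
    (a b : ι → ℝ) (t : ℝ) :
    ‖∏ j, (1 + exp (↑(2 * π * (t * a j - b j)) * I))‖ ^ (2 * k) =
      ‖∑ n : ι → Fin (2 * k + 1), (∏ j, ((2 * k).choose (n j) : ℂ)) *
        exp (↑(-(2 * π * ∑ j, (n j : ℝ) * b j)) * I) *
        exp (↑(2 * π * ∑ j, ((n j : ℝ) - k) * a j) * t * I)‖ := by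
  have hsum : (∏ j, (1 + exp (↑(2 * π * (t * a j - b j)) * I))) ^ (2 * k) =
      exp (↑(2 * π * k * (t * ∑ j, a j)) * I) * ∑ n : ι → Fin (2 * k + 1),
        (∏ j, ((2 * k).choose (n j) : ℂ)) * exp (↑(-(2 * π * ∑ j, (n j : ℝ) * b j)) * I) *
        exp (↑(2 * π * ∑ j, ((n j : ℝ) - k) * a j) * t * I) := by
    rw [prod_one_add_pow_eq_sum, mul_sum]
    refine sum_congr rfl fun n _ => ?_
    simp_rw [prod_mul_distrib, ← Complex.exp_nat_mul, ← Complex.exp_sum]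
    rw [mul_left_comm, mul_assoc, ← Complex.exp_add, ← Complex.exp_add]
    congr 2
    push_cast
    simp only [mul_sum, sum_mul, ← sum_neg_distrib, ← sum_add_distrib]
    exact sum_congr rfl fun j _ => by ring
  rw [← norm_pow, hsum, norm_mul, norm_exp_ofReal_mul_I, one_mul]

lemma two_pi_mul_sum_sub_mul_eq_zero_iff {ι : Type*} [Fintype ι] {a : ι → ℝ}
    (ha : LinearIndependent ℚ a) (k : ℕ) (n : ι → Fin (2 * k + 1)) :
    2 * π * ∑ j, ((n j : ℝ) - k) * a j = 0 ↔ n = fun _ => ⟨k, by omega⟩ := by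
  constructor
  · intro h
    have hq := Fintype.linearIndependent_iff.1 ha (fun j => ((n j : ℕ) : ℚ) - k) <| by
      rw [← (mul_eq_zero.1 h).resolve_left (by positivity)]
      exact sum_congr rfl fun j _ => by rw [Rat.smul_def]; push_cast; ring
    funext j
    have := hq j
    ext
    simp only
    exact_mod_cast sub_eq_zero.1 this
  · rintro rfl
    simp

lemma exists_two_mul_pow_le_choose_pow (N : ℕ) {γ : ℝ} (hγ0 : 0 ≤ γ) (hγ1 : γ < 1) :
    ∃ k, 0 < k ∧ 2 * (2 ^ N * γ) ^ (2 * k) ≤ ((2 * k).choose k : ℝ) ^ N := by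
  have htend := tendsto_pow_const_mul_const_pow_of_lt_one N (sq_nonneg γ) (by nlinarith)
  obtain ⟨k, hk0, hk⟩ := ((Filter.eventually_gt_atTop 0).and
    (htend.eventually_le_const (by positivity : (0 : ℝ) < 1 / (2 * 2 ^ N)))).exists
  refine ⟨k, hk0, ?_⟩
  have hC : (4 : ℝ) ^ k ≤ 2 * k * (2 * k).choose k := by
    exact_mod_cast Nat.centralBinom_eq_two_mul_choose k ▸
      Nat.four_pow_le_two_mul_self_mul_centralBinom k hk0
  calc 2 * (2 ^ N * γ) ^ (2 * k) = 2 * (4 ^ k) ^ N * (γ ^ 2) ^ k := by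
        rw [mul_pow, ← pow_mul, ← pow_mul, ← pow_mul, show (4 : ℝ) = 2 ^ 2 by norm_num, ← pow_mul]
        ring
    _ ≤ 2 * (2 * k * (2 * k).choose k) ^ N * (γ ^ 2) ^ k := by gcongr
    _ = (2 * 2 ^ N * (k ^ N * (γ ^ 2) ^ k)) * ((2 * k).choose k : ℝ) ^ N := by ring
    _ ≤ ((2 * k).choose k : ℝ) ^ N := by
        refine mul_le_of_le_one_left (by positivity) ?_
        calc _ ≤ (2 : ℝ) * 2 ^ N * (1 / (2 * 2 ^ N)) := by gcongr
          _ = 1 := by field_simp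

lemma le_of_pow_card_mul_le_mul_prod {ι : Type*} [Fintype ι] {f : ι → ℝ} {M x : ℝ}
    (hM : 0 < M) (hf0 : ∀ i, 0 ≤ f i) (hfM : ∀ i, f i ≤ M)
    (h : M ^ Fintype.card ι * x ≤ M * ∏ i, f i) (j : ι) : x ≤ f j := by
  classical
  rw [← card_univ, ← prod_const, ← mul_prod_erase _ _ (mem_univ j),
    ← mul_prod_erase _ _ (mem_univ j)] at h
  have hrest : ∏ i ∈ univ.erase j, f i ≤ ∏ _i ∈ univ.erase j, M :=
    prod_le_prod (fun i _ => hf0 i) fun i _ => hfM i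
  have hpos : 0 < M * ∏ _i ∈ univ.erase j, M := by positivity
  refine le_of_mul_le_mul_left (h.trans ?_) hpos
  calc M * (f j * ∏ i ∈ univ.erase j, f i) ≤ M * (f j * ∏ _i ∈ univ.erase j, M) :=
        mul_le_mul_of_nonneg_left (mul_le_mul_of_nonneg_left hrest (hf0 j)) hM.le
    _ = _ := by ring

lemma exists_gt_half_choose_pow_le_norm_prod_pow {ι : Type*} [Fintype ι] [DecidableEq ι]
    {a : ι → ℝ} (ha : LinearIndependent ℚ a) (b : ι → ℝ) (k : ℕ) (T : ℝ) :
    ∃ t, T < t ∧ ((2 * k).choose k : ℝ) ^ Fintype.card ι / 2 ≤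
      ‖∏ j, (1 + exp (↑(2 * π * (t * a j - b j)) * I))‖ ^ (2 * k) := by
  obtain ⟨t, hTt, ht⟩ := exists_gt_norm_sub_le_norm_sum_exp
    (fun n => (∏ j, ((2 * k).choose (n j) : ℂ)) * exp (↑(-(2 * π * ∑ j, (n j : ℝ) * b j)) * I))
    _ (two_pi_mul_sum_sub_mul_eq_zero_iff ha k) T
    (η := ((2 * k).choose k : ℝ) ^ Fintype.card ι / 2)
    (by have := Nat.choose_pos (show k ≤ 2 * k by omega); positivity)
  refine ⟨t, hTt, ?_⟩
  rw [norm_prod_one_add_exp_pow_eq]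
  rw [norm_mul, norm_exp_ofReal_mul_I, mul_one, norm_prod] at ht
  simp only [Complex.norm_natCast, prod_const, card_univ] at ht
  linarith

theorem stmt_0_general (N : ℕ) (a b : Fin N → ℝ) (ha : LinearIndependent ℚ a)
    (ε T : ℝ) (hε : 0 < ε) :
    ∃ t : ℝ, T < t ∧ ∃ x : Fin N → ℤ, ∀ j, |t * a j - b j - (x j : ℝ)| ≤ ε := by
  set δ := min ε (1 / 2)
  have hδ0 : 0 < δ := lt_min hε one_half_pos
  have hδ1 : δ ≤ 1 / 2 := min_le_right _ _
  set γ := Real.cos (π * δ)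
  have hγ0 : 0 ≤ γ :=
    Real.cos_nonneg_of_mem_Icc ⟨by nlinarith [Real.pi_pos], by nlinarith [Real.pi_pos]⟩
  have hγ1 : γ < 1 := by
    simpa using Real.strictAntiOn_cos ⟨le_rfl, Real.pi_pos.le⟩
      ⟨by positivity, by nlinarith [Real.pi_pos]⟩ (by positivity : 0 < π * δ)
  obtain ⟨k, hk, hkγ⟩ := exists_two_mul_pow_le_choose_pow N hγ0 hγ1
  obtain ⟨t, hTt, ht⟩ := exists_gt_half_choose_pow_le_norm_prod_pow ha b k T
  rw [Fintype.card_fin] at ht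
  have hprod : 2 ^ N * γ ≤ ‖∏ j, (1 + exp (↑(2 * π * (t * a j - b j)) * I))‖ :=
    le_of_pow_le_pow_left₀ (n := 2 * k) (by omega) (norm_nonneg _) (by linarith)
  refine ⟨t, hTt, fun j => round (t * a j - b j), fun j => ?_⟩
  refine (abs_sub_round_le_of_cos_le_abs_cos hδ0.le (by linarith) ?_).trans (min_le_left _ _)
  have hfactor := le_of_pow_card_mul_le_mul_prod (M := 2) (x := 2 * γ) two_pos
    (fun _ => norm_nonneg _) (fun i => norm_one_add_exp_le_two _)
    (by rw [← norm_prod, Fintype.card_fin]; linarith) j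
  rw [norm_one_add_exp_two_pi_mul_I] at hfactor
  linarith

/-- Kronecker's theorem on simultaneous diophantine approximation. -/
theorem stmt_0 (N : ℕ) (a b : Fin N → ℝ) (ha : LinearIndependent ℚ a)
    (ε T : ℝ) (hε : 0 < ε) (hT : 0 < T) :
    ∃ t : ℝ, T < t ∧ ∃ x : Fin N → ℤ, ∀ j, |t * a j - b j - (x j : ℝ)| ≤ ε :=
  stmt_0_general N a b ha ε T hε
end

section
/- Let (γ_j)_{j≥1} be a sequence of positive real numbers and Λ a positive integer such that 1, γ_1, ..., γ_Λ are linearly independent over ℚ and for every j > Λ there exist rational numbers c_{j,1}, ..., c_{j,Λ} with γ_j = c_{j,1}·γ_1 + ... + c_{j,Λ}·γ_Λ. Then for every positive integer N there exists a positive integer m such that m·γ_j − ⌊m·γ_j⌋ ≥ 1/4 for all 1 ≤ j ≤ N. -/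
/-!
The heart of the matter is Kronecker's theorem, proved by Bohr's method: if every `m > 0`
missed the target box `m x ≈ β (mod 1)`, the trigonometric polynomial
`φ(n) = ∏ᵢ (1 + e(n xᵢ - βᵢ))` would satisfy `|φ(n)| ≤ 2^d cos(πδ)` at every `n > 0`. Since the
frequencies of `φ^{2s}` are pairwise distinct modulo `1`, averaging over `n` shows that no
coefficient exceeds this bound to the power `2s`; but the central one is
`binom(2s, s)^d ≥ (4^s / 2s)^d`, which beats `(2^d cos(πδ))^{2s}` for large `s`.

For the corollary, rescale by a common denominator `Q` of the coefficients `c_{j,i}` and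
aim `m γᵢ / Q` at `-ε γᵢ / Q` for `i ≤ Λ`: since `Q c_{j,i}` is an integer, `m γⱼ` is then
close to `-ε γⱼ` modulo `1` for every `j ≤ N`, and `0 < ε γⱼ < 3/8` because `γⱼ > 0`.
-/

open Finset Filter Topology Real
open scoped FourierTransform

theorem norm_geom_sum_le {𝕜 : Type*} [NormedField 𝕜] {w : 𝕜} (hw : ‖w‖ ≤ 1) (hw1 : w ≠ 1)
    (T : ℕ) : ‖∑ n ∈ range T, w ^ n‖ ≤ 2 / ‖w - 1‖ := by
  rw [geom_sum_eq hw1, norm_div]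
  gcongr
  calc ‖w ^ T - 1‖ ≤ ‖w‖ ^ T + ‖(1 : 𝕜)‖ := by rw [← norm_pow]; exact norm_sub_le _ _
    _ ≤ 2 := by rw [norm_one]; linarith [pow_le_one₀ (norm_nonneg w) hw (n := T)]

theorem sum_inv_pow_mul_sum_mul_pow {K F : Type*} [DecidableEq K] [Field F] {s : Finset K}
    (a z : K → F) {k₀ : K} (hk₀ : k₀ ∈ s) (hz₀ : z k₀ ≠ 0) (T : ℕ) :
    ∑ n ∈ range T, (z k₀)⁻¹ ^ (n + 1) * ∑ k ∈ s, a k * z k ^ (n + 1) =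
      T * a k₀ + ∑ k ∈ s.erase k₀, a k * ∑ n ∈ range T, (z k / z k₀) ^ (n + 1) := by
  have hterm (k : K) (n : ℕ) :
      (z k₀)⁻¹ ^ (n + 1) * (a k * z k ^ (n + 1)) = a k * (z k / z k₀) ^ (n + 1) := by
    rw [div_pow, inv_pow]; ring
  calc _ = ∑ k ∈ s, a k * ∑ n ∈ range T, (z k / z k₀) ^ (n + 1) := by
        simp_rw [mul_sum, hterm]; rw [sum_comm]
    _ = _ := by
        rw [← add_sum_erase _ _ hk₀]
        simp [div_self hz₀, mul_comm]

theorem norm_le_of_forall_norm_sum_mul_pow_le {K : Type*} {s : Finset K} {z : K → Circle}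
    (hz : Set.InjOn z s) (a : K → ℂ) {B : ℝ}
    (hB : ∀ n : ℕ, 0 < n → ‖∑ k ∈ s, a k * (z k : ℂ) ^ n‖ ≤ B) {k₀ : K} (hk₀ : k₀ ∈ s) :
    ‖a k₀‖ ≤ B := by
  classical
  set w : K → ℂ := fun k => (z k : ℂ) / z k₀
  have hw : ∀ k, ‖w k‖ = 1 := fun k => by simp [w, Circle.norm_coe]
  have hw1 : ∀ k ∈ s.erase k₀, w k ≠ 1 := fun k hk h =>
    ne_of_mem_erase hk <| hz (mem_of_mem_erase hk) hk₀ <|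
      Circle.coe_inj.1 ((div_eq_one_iff_eq (Circle.coe_ne_zero _)).1 h)
  set E := ∑ k ∈ s.erase k₀, ‖a k‖ * (2 / ‖w k - 1‖)
  have hT (T : ℕ) : T * ‖a k₀‖ ≤ T * B + E := by
    have hmain : ‖∑ n ∈ range T, ((z k₀ : ℂ)⁻¹) ^ (n + 1) * ∑ k ∈ s, a k * (z k : ℂ) ^ (n + 1)‖
        ≤ T * B := by
      refine (norm_sum_le _ _).trans ?_
      simpa [Circle.norm_coe] using sum_le_sum fun n (_ : n ∈ range T) => hB (n + 1) n.succ_pos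
    have hrest : ‖∑ k ∈ s.erase k₀, a k * ∑ n ∈ range T, w k ^ (n + 1)‖ ≤ E := by
      refine (norm_sum_le _ _).trans (sum_le_sum fun k hk => ?_)
      rw [norm_mul]
      gcongr
      simp_rw [pow_succ', ← mul_sum, norm_mul, hw, one_mul]
      exact norm_geom_sum_le (hw k).le (hw1 k hk) T
    calc (T : ℝ) * ‖a k₀‖ = ‖(T : ℂ) * a k₀‖ := by simp
      _ ≤ _ := by
        rw [eq_sub_of_add_eq (sum_inv_pow_mul_sum_mul_pow a (fun k => (z k : ℂ)) hk₀
          (Circle.coe_ne_zero _) T).symm]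
        exact (norm_sub_le _ _).trans (add_le_add hmain hrest)
  have hlim : Tendsto (fun T : ℕ => B + E / T) atTop (𝓝 B) := by
    simpa using tendsto_const_nhds.add (tendsto_const_div_atTop_nhds_zero_nat E)
  refine ge_of_tendsto hlim (eventually_atTop.2 ⟨1, fun T hT1 => ?_⟩)
  have hT0 : (0 : ℝ) < T := by exact_mod_cast hT1
  rw [add_div' _ _ _ hT0.ne', le_div_iff₀ hT0]
  linarith [hT T]

theorem Finset.prod_one_add_pow {ι R : Type*} [Fintype ι] [DecidableEq ι] [CommSemiring R]
    (y : ι → R) (p : ℕ) :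
    ∏ i, (1 + y i) ^ p =
      ∑ k ∈ Fintype.piFinset fun _ => range (p + 1), ∏ i, (p.choose (k i) * y i ^ k i) := by
  simp_rw [add_comm (1 : R), add_pow, one_pow, mul_one, mul_comm (y _ ^ _)]
  exact prod_univ_sum _ _

theorem AddChar.map_sum_eq_prod {ι A M : Type*} [AddCommMonoid A] [CommMonoid M]
    (ψ : AddChar A M) (s : Finset ι) (f : ι → A) : ψ (∑ i ∈ s, f i) = ∏ i ∈ s, ψ (f i) := by
  classical
  induction s using Finset.induction_on with
  | empty => simp
  | insert i s hi ih => rw [sum_insert hi, prod_insert hi, map_add_eq_mul, ih]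

theorem Real.fourierChar_eq_one_iff {θ : ℝ} : 𝐞 θ = 1 ↔ ∃ n : ℤ, θ = n := by
  rw [fourierChar_apply', Circle.exp_eq_one]
  refine exists_congr fun n => ⟨fun h => ?_, fun h => by rw [h]; ring⟩
  nlinarith [pi_pos]

theorem Real.norm_one_add_fourierChar (θ : ℝ) : ‖1 + (𝐞 θ : ℂ)‖ = 2 * |cos (π * θ)| := by
  have h : 1 + (𝐞 θ : ℂ) = Complex.exp (↑(π * θ) * Complex.I) * (2 * Complex.cos ↑(π * θ)) := by
    rw [Complex.two_cos, mul_add, ← Complex.exp_add, ← Complex.exp_add, fourierChar_apply]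
    push_cast
    ring_nf
    simp [add_comm]
  rw [h, norm_mul, Complex.norm_exp_ofReal_mul_I, norm_mul, ← Complex.ofReal_cos,
    Complex.norm_real, Real.norm_eq_abs]
  norm_num

theorem Real.abs_cos_pi_mul_le {δ θ : ℝ} (hδ : 0 ≤ δ) (h : ∀ k : ℤ, δ ≤ |θ - k|) :
    |cos (π * θ)| ≤ cos (π * δ) := by
  set u := θ - round θ
  have hu : |u| ≤ 1 / 2 := abs_sub_round θ
  have hcos : |cos (π * θ)| = cos (π * |u|) := by
    have : π * θ = π * u + round θ * π := by ring
    rw [this, cos_add_int_mul_pi, abs_mul, abs_neg_one_zpow, one_mul, ← cos_abs (π * u),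
      abs_mul, abs_of_pos pi_pos, abs_of_nonneg]
    apply cos_nonneg_of_neg_pi_div_two_le_of_le <;> nlinarith [pi_pos, abs_nonneg u]
  rw [hcos]
  apply cos_le_cos_of_nonneg_of_le_pi (by positivity) (by nlinarith [pi_pos, abs_nonneg u])
  exact mul_le_mul_of_nonneg_left (h _) pi_pos.le

theorem Real.prod_one_add_fourierChar_pow {ι : Type*} [Fintype ι] [DecidableEq ι]
    (x β : ι → ℝ) (p n : ℕ) :
    (∏ i, (1 + (𝐞 (n * x i - β i) : ℂ))) ^ p =
      ∑ k ∈ Fintype.piFinset fun _ => range (p + 1),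
        (∏ i, (p.choose (k i) : ℂ)) * 𝐞 (-∑ i, k i * β i) * (𝐞 (∑ i, k i * x i) : ℂ) ^ n := by
  rw [← prod_pow, prod_one_add_pow]
  refine sum_congr rfl fun k _ => ?_
  have hsum : ∑ i, k i • (n * x i - β i) = -∑ i, k i * β i + n • ∑ i, k i * x i := by
    rw [nsmul_eq_mul, mul_sum, ← sum_neg_distrib, ← sum_add_distrib]
    exact sum_congr rfl fun i _ => by rw [nsmul_eq_mul]; ring
  have hexp : ∏ i, 𝐞 (n * x i - β i) ^ k i = 𝐞 (-∑ i, k i * β i) * 𝐞 (∑ i, k i * x i) ^ n := by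
    simp only [← AddChar.map_nsmul_eq_pow, ← AddChar.map_sum_eq_prod, hsum,
      AddChar.map_add_eq_mul]
  have := congrArg Circle.coeHom hexp
  rw [map_prod, map_mul, map_pow] at this
  rw [prod_mul_distrib, mul_assoc]
  exact congrArg _ this

theorem Real.norm_prod_one_add_fourierChar_le {ι : Type*} [Fintype ι] {θ : ι → ℝ} {δ : ℝ}
    (hδ : 0 ≤ δ) {i₀ : ι} (hi₀ : ∀ k : ℤ, δ ≤ |θ i₀ - k|) :
    ‖∏ i, (1 + (𝐞 (θ i) : ℂ))‖ ≤ 2 ^ Fintype.card ι * cos (π * δ) := by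
  classical
  simp_rw [norm_prod, norm_one_add_fourierChar, prod_mul_distrib, prod_const, card_univ]
  gcongr
  calc ∏ i, |cos (π * θ i)| ≤ |cos (π * θ i₀)| := by
        rw [← mul_prod_erase _ _ (mem_univ i₀)]
        exact mul_le_of_le_one_right (abs_nonneg _)
          (prod_le_one (fun _ _ => abs_nonneg _) fun _ _ => abs_cos_le_one _)
    _ ≤ _ := abs_cos_pi_mul_le hδ hi₀

theorem Real.fourierChar_sum_mul_injective {ι : Type*} [Fintype ι] {x : ι → ℝ}
    (hx : ∀ k : ι → ℤ, (∃ n : ℤ, ∑ i, k i * x i = n) → k = 0) :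
    Function.Injective fun k : ι → ℕ => 𝐞 (∑ i, k i * x i) := by
  intro k l hkl
  obtain ⟨n, hn⟩ := (fourierChar_eq_one_iff (θ := ∑ i, k i * x i - ∑ i, l i * x i)).1
    (by rw [AddChar.map_sub_eq_div, div_eq_one]; exact hkl)
  have hkl : (fun i => (k i : ℤ) - l i) = 0 :=
    hx _ ⟨n, by push_cast; rw [← hn, ← sum_sub_distrib]; simp [sub_mul]⟩
  funext i
  have := congrFun hkl i
  simp only [Pi.zero_apply] at this
  omega

theorem Real.centralBinom_pow_le_of_forall_norm_prod_le {ι : Type*} [Fintype ι] {x : ι → ℝ}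
    (hx : Function.Injective fun k : ι → ℕ => 𝐞 (∑ i, k i * x i)) (β : ι → ℝ) {R : ℝ}
    (hR : ∀ n : ℕ, 0 < n → ‖∏ i, (1 + (𝐞 (n * x i - β i) : ℂ))‖ ≤ R) (s : ℕ) :
    (s.centralBinom : ℝ) ^ Fintype.card ι ≤ R ^ (2 * s) := by
  classical
  have hk₀ : (fun _ => s) ∈ Fintype.piFinset fun _ : ι => range (2 * s + 1) := by
    simp only [Fintype.mem_piFinset, mem_range]; intro; omega
  have := norm_le_of_forall_norm_sum_mul_pow_le hx.injOn
    (fun k => (∏ i, ((2 * s).choose (k i) : ℂ)) * 𝐞 (-∑ i, k i * β i))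
    (B := R ^ (2 * s)) (fun n hn => ?_) hk₀
  · simpa [Circle.norm_coe, Nat.centralBinom_eq_two_mul_choose] using this
  rw [← prod_one_add_fourierChar_pow, norm_pow]
  gcongr
  exact hR n hn

theorem exists_pow_lt_centralBinom_pow (d : ℕ) {r : ℝ} (hr0 : 0 ≤ r) (hr1 : r < 1) :
    ∃ s : ℕ, (2 ^ d * r) ^ (2 * s) < (s.centralBinom : ℝ) ^ d := by
  obtain ⟨s, hs0, hs⟩ : ∃ s : ℕ, 0 < s ∧ 2 ^ d * ((s : ℝ) ^ d * (r ^ 2) ^ s) < 1 := by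
    have hr2 : |r ^ 2| < 1 := by rw [abs_of_nonneg (by positivity)]; nlinarith
    have := (tendsto_pow_const_mul_const_pow_of_abs_lt_one d hr2).const_mul ((2 : ℝ) ^ d)
    rw [mul_zero] at this
    exact ((eventually_gt_atTop 0).and (this.eventually (gt_mem_nhds one_pos))).exists
  have h4 : (4 : ℝ) ^ s ≤ 2 * s * s.centralBinom := by
    exact_mod_cast Nat.four_pow_le_two_mul_self_mul_centralBinom s hs0
  refine ⟨s, ?_⟩
  calc (2 ^ d * r) ^ (2 * s) = ((4 : ℝ) ^ s) ^ d * (r ^ 2) ^ s := by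
        rw [mul_pow, ← pow_mul, ← pow_mul, ← pow_mul, ← mul_assoc, mul_comm d 2, mul_assoc,
          pow_mul, mul_comm s d]
        norm_num
    _ ≤ (2 * s * s.centralBinom) ^ d * (r ^ 2) ^ s := by gcongr
    _ = 2 ^ d * ((s : ℝ) ^ d * (r ^ 2) ^ s) * (s.centralBinom : ℝ) ^ d := by ring
    _ < (s.centralBinom : ℝ) ^ d :=
      mul_lt_of_lt_one_left (pow_pos (mod_cast s.centralBinom_pos) d) hs

theorem exists_nat_abs_mul_sub_sub_int_lt {ι : Type*} [Fintype ι] {x : ι → ℝ}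
    (hx : ∀ k : ι → ℤ, (∃ n : ℤ, ∑ i, k i * x i = n) → k = 0) (β : ι → ℝ) {η : ℝ}
    (hη : 0 < η) : ∃ m : ℕ, 0 < m ∧ ∀ i, ∃ k : ℤ, |m * x i - β i - k| < η := by
  by_contra! h
  set δ := min η (1 / 2)
  have hδ0 : 0 < δ := lt_min hη one_half_pos
  have hδ1 : δ ≤ 1 / 2 := min_le_right _ _
  have hr0 : 0 ≤ cos (π * δ) :=
    cos_nonneg_of_neg_pi_div_two_le_of_le (by nlinarith [pi_pos]) (by nlinarith [pi_pos])
  have hr1 : cos (π * δ) < 1 := by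
    rw [← cos_zero]
    exact cos_lt_cos_of_nonneg_of_le_pi le_rfl (by nlinarith [pi_pos]) (by positivity)
  have hφ (n : ℕ) (hn : 0 < n) :
      ‖∏ i, (1 + (𝐞 (n * x i - β i) : ℂ))‖ ≤ 2 ^ Fintype.card ι * cos (π * δ) := by
    obtain ⟨i₀, hi₀⟩ := h n hn
    exact norm_prod_one_add_fourierChar_le hδ0.le fun k => (min_le_left _ _).trans (hi₀ k)
  obtain ⟨s, hs⟩ := exists_pow_lt_centralBinom_pow (Fintype.card ι) hr0 hr1
  exact hs.not_ge (centralBinom_pow_le_of_forall_norm_prod_le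
    (fourierChar_sum_mul_injective hx) β hφ s)

theorem exists_pos_forall_mul_lt {ι : Type*} (s : Finset ι) (a b : ι → ℝ)
    (hb : ∀ i ∈ s, 0 < b i) : ∃ ε > 0, ∀ i ∈ s, ε * a i < b i := by
  have hsmall : ∀ i ∈ s, ∀ᶠ ε in 𝓝[>] (0 : ℝ), ε * a i < b i := fun i hi =>
    (((continuous_mul_const (a i)).tendsto' 0 0 (zero_mul _)).mono_left
      nhdsWithin_le_nhds).eventually (gt_mem_nhds (hb i hi))
  exact (eventually_mem_nhdsWithin.and ((eventually_all_finset s).2 hsmall)).exists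

theorem Finset.exists_nat_mul_eq_int (S : Finset ℚ) :
    ∃ Q : ℕ, 0 < Q ∧ ∀ q ∈ S, ∃ d : ℤ, (Q : ℚ) * q = d := by
  refine ⟨∏ q ∈ S, q.den, prod_pos fun q _ => q.den_pos, fun q hq => ?_⟩
  obtain ⟨t, ht⟩ := dvd_prod_of_mem Rat.den hq
  refine ⟨q.num * t, ?_⟩
  rw [ht]
  push_cast
  rw [mul_right_comm, mul_comm (q.den : ℚ) q, Rat.mul_den_eq_num]

theorem exists_int_abs_sum_mul_sub_le {ι : Type*} [Fintype ι] {Q : ℕ} (hQ : 0 < Q)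
    {c : ι → ℚ} (hc : ∀ i, ∃ d : ℤ, (Q : ℚ) * c i = d) {v : ι → ℝ} {η : ℝ}
    (hv : ∀ i, ∃ k : ℤ, |v i / Q - k| < η) :
    ∃ n : ℤ, |∑ i, c i * v i - n| ≤ η * (Q * ∑ i, |(c i : ℝ)|) := by
  choose d hd using hc
  choose k hk using hv
  have hdR : ∀ i, (d i : ℝ) = Q * c i := fun i => by exact_mod_cast (hd i).symm
  refine ⟨∑ i, d i * k i, ?_⟩
  have hQ' : (Q : ℝ) ≠ 0 := by positivity
  have : ∑ i, c i * v i - ((∑ i, d i * k i : ℤ) : ℝ) = ∑ i, Q * c i * (v i / Q - k i) := by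
    push_cast
    rw [← sum_sub_distrib]
    refine sum_congr rfl fun i _ => ?_
    rw [hdR]
    field_simp
  rw [this, mul_sum, mul_sum]
  refine (abs_sum_le_sum_abs _ _).trans (sum_le_sum fun i _ => ?_)
  rw [abs_mul, abs_mul, Nat.abs_cast]
  calc _ ≤ Q * |(c i : ℝ)| * η := by gcongr; exact (hk i).le
    _ = _ := by ring

theorem one_sub_two_mul_lt_fract {x u : ℝ} {n : ℤ} (h : |x + u - n| < u) :
    1 - 2 * u < Int.fract x := by
  obtain ⟨h₁, h₂⟩ := abs_lt.1 h
  rcases le_or_gt (2 * u) 1 with hu | hu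
  · have : ⌊x⌋ = n - 1 := by
      rw [Int.floor_eq_iff]; push_cast; constructor <;> linarith
    rw [Int.fract, this]; push_cast; linarith
  · linarith [Int.fract_nonneg x]

theorem eq_zero_of_sum_mul_eq_ratCast {Λ : ℕ} {γ : ℕ → ℝ}
    (hli : LinearIndependent ℚ (fun i : Fin (Λ + 1) => if (i : ℕ) = 0 then (1 : ℝ) else γ i))
    {k : Fin Λ → ℤ} {r : ℚ} (h : ∑ i, k i * γ (i + 1) = r) : k = 0 := by
  have := Fintype.linearIndependent_iff.1 hli (Fin.cons (-r) fun i => (k i : ℚ)) (by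
    rw [Fin.sum_univ_succ]
    simp [Rat.smul_def, h])
  funext i
  simpa using this i.succ

theorem exists_rat_coeffs {Λ : ℕ} {γ : ℕ → ℝ}
    (hdep : ∀ j, Λ < j → ∃ c : Fin Λ → ℚ, γ j = ∑ i, (c i : ℝ) * γ ((i : ℕ) + 1))
    {j : ℕ} (hj : 1 ≤ j) : ∃ c : Fin Λ → ℚ, γ j = ∑ i, (c i : ℝ) * γ ((i : ℕ) + 1) := by
  rcases le_or_gt j Λ with hjΛ | hjΛ
  · refine ⟨Pi.single ⟨j - 1, by omega⟩ 1, ?_⟩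
    rw [Fintype.sum_eq_single ⟨j - 1, by omega⟩ fun i hi => by simp [hi]]
    rw [Pi.single_eq_same, Rat.cast_one, one_mul, Nat.sub_add_cancel hj]
  · exact hdep j hjΛ

theorem stmt_1_general (γ : ℕ → ℝ) (hpos : ∀ j, 1 ≤ j → 0 < γ j) (Λ : ℕ)
    (hli : LinearIndependent ℚ (fun i : Fin (Λ + 1) => if (i : ℕ) = 0 then (1 : ℝ) else γ i))
    (hdep : ∀ j, Λ < j → ∃ c : Fin Λ → ℚ, γ j = ∑ i, (c i : ℝ) * γ ((i : ℕ) + 1)) :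
    ∀ N : ℕ, 0 < N → ∃ m : ℕ, 0 < m ∧ ∀ j, 1 ≤ j → j ≤ N →
      (1 : ℝ) / 4 ≤ (m : ℝ) * γ j - ⌊(m : ℝ) * γ j⌋ := by
  intro N _
  choose! c hc using fun j (hj : 1 ≤ j) => exists_rat_coeffs hdep hj
  obtain ⟨Q, hQ, hQc⟩ := ((Icc 1 N).biUnion fun j => univ.image (c j)).exists_nat_mul_eq_int
  have hγ : ∀ j ∈ Icc 1 N, 0 < γ j := fun j hj => hpos j (mem_Icc.1 hj).1
  obtain ⟨ε, hε, hεγ⟩ := exists_pos_forall_mul_lt (Icc 1 N) γ (fun _ => 3 / 8) fun _ _ => by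
    norm_num
  obtain ⟨η, hη, hηc⟩ := exists_pos_forall_mul_lt (Icc 1 N)
    (fun j => Q * ∑ i, |(c j i : ℝ)|) (fun j => ε * γ j) fun j hj => mul_pos hε (hγ j hj)
  have hx : ∀ k : Fin Λ → ℤ, (∃ n : ℤ, ∑ i, k i * (γ (i + 1) / Q) = n) → k = 0 := by
    rintro k ⟨n, hn⟩
    refine eq_zero_of_sum_mul_eq_ratCast hli (r := n * Q) ?_
    push_cast
    rw [← hn, sum_mul]
    refine sum_congr rfl fun i _ => ?_
    field_simp
  obtain ⟨m, hm, hmx⟩ := exists_nat_abs_mul_sub_sub_int_lt hx (fun i => -(ε * γ (i + 1)) / Q) hη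
  refine ⟨m, hm, fun j hj1 hjN => ?_⟩
  have hj : j ∈ Icc 1 N := mem_Icc.2 ⟨hj1, hjN⟩
  obtain ⟨n, hn⟩ := exists_int_abs_sum_mul_sub_le hQ
    (fun i => hQc _ (mem_biUnion.2 ⟨j, hj, mem_image_of_mem _ (mem_univ i)⟩))
    (v := fun i => (m + ε) * γ (i + 1)) (η := η) fun i => by
      simpa only [add_mul, add_div, mul_div_assoc, neg_div, sub_neg_eq_add] using hmx i
  have hsum : (m : ℝ) * γ j + ε * γ j = ∑ i, c j i * ((m + ε) * γ (i + 1)) := by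
    rw [← add_mul, hc j hj1, mul_sum]
    exact sum_congr rfl fun i _ => by ring
  rw [Int.self_sub_floor]
  have := one_sub_two_mul_lt_fract (hsum ▸ hn.trans_lt (hηc j hj))
  linarith [hεγ j hj]

/-- Corollary to Kronecker's diophantine approximation (5.2.2.4). -/
theorem stmt_1 (γ : ℕ → ℝ) (hpos : ∀ j, 1 ≤ j → 0 < γ j) (Λ : ℕ) (hΛ : 0 < Λ)
    (hli : LinearIndependent ℚ (fun i : Fin (Λ + 1) => if (i : ℕ) = 0 then (1 : ℝ) else γ i))
    (hdep : ∀ j, Λ < j → ∃ c : Fin Λ → ℚ, γ j = ∑ i, (c i : ℝ) * γ ((i : ℕ) + 1)) :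
    ∀ N : ℕ, 0 < N → ∃ m : ℕ, 0 < m ∧ ∀ j, 1 ≤ j → j ≤ N →
      (1 : ℝ) / 4 ≤ (m : ℝ) * γ j - ⌊(m : ℝ) * γ j⌋ :=
  stmt_1_general γ hpos Λ hli hdep
end

section
/- Let (γ_j)_{j≥1} be a sequence of positive rational numbers such that the series ∑_{j=1}^∞ γ_j converges. Then there exists a sequence (p_ν)_{ν≥1} of positive integers such that ∑_{j=1}^∞ (p_ν·γ_j − ⌊p_ν·γ_j⌋) → ∞ as ν → ∞. -/
open scoped ENNReal


/-- Divergence of sums of fractional parts for a summable sequence of positive rationals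
(statement (5.2.2.3), rational case). -/
theorem stmt_2 (γ : ℕ → ℚ) (hpos : ∀ j, 0 < γ j)
    (hsum : Summable fun j => ((γ j : ℝ))) :
    ∃ p : ℕ → ℕ, (∀ ν, 0 < p ν) ∧
      Filter.Tendsto (fun ν => ∑' j : ℕ, ENNReal.ofReal (Int.fract ((p ν : ℝ) * (γ j : ℝ))))
        Filter.atTop (nhds ⊤) := by
  classical
  obtain ⟨J, hJ⟩ : ∃ J, ∀ j ≥ J, ((γ j : ℝ)) < 1/2 := by
    have h := hsum.tendsto_atTop_zero
    have h2 := h.eventually (gt_mem_nhds (by norm_num : (0:ℝ) < 1/2))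
    rw [Filter.eventually_atTop] at h2
    exact h2
  have hden : ∀ j ≥ J, 2 ≤ (γ j).den := by
    intro j hj
    by_contra h
    have hpos' := (γ j).pos
    have h1 : (γ j).den = 1 := by omega
    have h2 := (Rat.den_eq_one_iff _).mp h1
    have hn : 0 < (γ j).num := Rat.num_pos.mpr (hpos j)
    have h3 : (1:ℚ) ≤ γ j := by rw [← h2]; exact_mod_cast hn
    have h4 : (1:ℝ) ≤ (γ j : ℝ) := by exact_mod_cast h3
    linarith [hJ j hj]
  set S : ℕ → Finset ℕ := fun ν => Finset.Ico J (J + 2*ν + 2) with hS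
  set d : ℕ → ℕ := fun ν => ∏ j ∈ S ν, (γ j).den with hd
  have hJmem : ∀ ν, J ∈ S ν := by
    intro ν; simp [hS, Finset.mem_Ico]; omega
  have hdpos : ∀ ν, 0 < d ν := by
    intro ν; exact Finset.prod_pos fun j _ => (γ j).pos
  have hd2 : ∀ ν, 2 ≤ d ν := by
    intro ν
    have hdvd : (γ J).den ∣ d ν := Finset.dvd_prod_of_mem _ (hJmem ν)
    exact le_trans (hden J le_rfl) (Nat.le_of_dvd (hdpos ν) hdvd)
  set p : ℕ → ℕ := fun ν => d ν - 1 with hp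
  have hppos : ∀ ν, 0 < p ν := fun ν => by have := hd2 ν; simp [hp]; omega
  have hmemJ : ∀ ν, ∀ j ∈ S ν, J ≤ j := by
    intro ν j hj; exact (Finset.mem_Ico.mp hj).1
  have hint : ∀ ν, ∀ j ∈ S ν, ∃ k : ℤ, ((d ν : ℝ)) * (γ j : ℝ) = k := by
    intro ν j hj
    obtain ⟨m, hm⟩ := Finset.dvd_prod_of_mem (fun j => (γ j).den) hj
    refine ⟨(γ j).num * m, ?_⟩
    have h2 : ((γ j : ℝ)) * ((γ j).den : ℝ) = ((γ j).num : ℝ) := by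
      exact_mod_cast congrArg (fun q : ℚ => (q : ℝ)) (Rat.mul_den_eq_num (γ j))
    have hm' : ((d ν : ℝ)) = ((γ j).den : ℝ) * (m : ℝ) := by exact_mod_cast hm
    rw [hm']
    push_cast
    linear_combination (m : ℝ) * h2
  have hfract : ∀ ν, ∀ j ∈ S ν, Int.fract ((p ν : ℝ) * (γ j : ℝ)) = 1 - (γ j : ℝ) := by
    intro ν j hj
    obtain ⟨k, hk⟩ := hint ν j hj
    have hj2 : (γ j : ℝ) < 1/2 := hJ j (hmemJ ν j hj)
    have hj0 : (0:ℝ) < (γ j : ℝ) := by exact_mod_cast hpos j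
    have hpcast : (p ν : ℝ) = (d ν : ℝ) - 1 := by
      have h1 : 1 ≤ d ν := (hdpos ν)
      simp [hp]
      push_cast [Nat.cast_sub h1]
      ring
    have heq : (p ν : ℝ) * (γ j : ℝ) = (k : ℝ) + (-(γ j : ℝ)) := by
      rw [hpcast]; linarith [hk]
    rw [heq, Int.fract_intCast_add, Int.fract_neg, Int.fract_eq_self.mpr ⟨le_of_lt hj0, by linarith⟩]
    rw [Int.fract_eq_self.mpr ⟨le_of_lt hj0, by linarith⟩]
    linarith
  refine ⟨p, hppos, ENNReal.tendsto_nhds_top fun n => ?_⟩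
  filter_upwards [Filter.eventually_ge_atTop n] with ν hν
  have hcard : (S ν).card = 2*ν + 2 := by simp [hS]; omega
  have hsum_lb : ∑ j ∈ S ν, ENNReal.ofReal ((1:ℝ)/2) ≤
      ∑ j ∈ S ν, ENNReal.ofReal (Int.fract ((p ν : ℝ) * (γ j : ℝ))) := by
    refine Finset.sum_le_sum fun j hj => ENNReal.ofReal_le_ofReal ?_
    rw [hfract ν j hj]
    have hj2 : (γ j : ℝ) < 1/2 := hJ j (hmemJ ν j hj)
    linarith
  have hconst : ∑ j ∈ S ν, ENNReal.ofReal ((1:ℝ)/2) = (2*ν + 2 : ℕ) * ENNReal.ofReal ((1:ℝ)/2) := by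
    rw [Finset.sum_const, hcard, nsmul_eq_mul]
  have hval : ((2*ν + 2 : ℕ) : ℝ≥0∞) * ENNReal.ofReal ((1:ℝ)/2) = ENNReal.ofReal ((ν:ℝ) + 1) := by
    rw [← ENNReal.ofReal_natCast, ← ENNReal.ofReal_mul (by positivity)]
    congr 1
    push_cast
    ring
  have hlt : (n : ℝ≥0∞) < ENNReal.ofReal ((ν:ℝ) + 1) := by
    rw [← ENNReal.ofReal_natCast n]
    rw [ENNReal.ofReal_lt_ofReal_iff (by positivity)]
    have : (n : ℝ) ≤ (ν : ℝ) := by exact_mod_cast hν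
    linarith
  calc (n : ℝ≥0∞) < ENNReal.ofReal ((ν:ℝ) + 1) := hlt
    _ = ∑ j ∈ S ν, ENNReal.ofReal ((1:ℝ)/2) := by rw [hconst, hval]
    _ ≤ ∑ j ∈ S ν, ENNReal.ofReal (Int.fract ((p ν : ℝ) * (γ j : ℝ))) := hsum_lb
    _ ≤ ∑' j : ℕ, ENNReal.ofReal (Int.fract ((p ν : ℝ) * (γ j : ℝ))) := ENNReal.sum_le_tsum _
end
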